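/- Let L > 0, α > 0, ω, γ ∈ ℝ, and let u : ℝ × ℝ → ℝ be a smooth function, L-periodic in its first (space) variable, satisfying the Dullin–Gottwald–Holm equation (1 − α²∂ₓ²)uₜ + 2ω uₓ + 3u uₓ + γ uₓₓₓ = α²(2 uₓ uₓₓ + u uₓₓₓ) on ℝ × ℝ. Then the functional F(u(·,t)) = (1/2)∫₀ᴸ (u³ + α² u uₓ² + 2ω u² − γ uₓ²)(x,t) dx is independent of t. -/

import Mathlib

open MeasureTheory intervalIntegral

noncomputable def pdx (f : ℝ × ℝ → ℝ) : ℝ × ℝ → ℝ := fun p => fderiv ℝ f p (1, 0)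
noncomputable def pdt (f : ℝ × ℝ → ℝ) : ℝ × ℝ → ℝ := fun p => fderiv ℝ f p (0, 1)

lemma contDiff_pdx {f : ℝ × ℝ → ℝ} (hf : ContDiff ℝ (⊤ : ℕ∞) f) : ContDiff ℝ (⊤ : ℕ∞) (pdx f) :=
  (hf.fderiv_right (by simp)).clm_apply contDiff_const

lemma contDiff_pdt {f : ℝ × ℝ → ℝ} (hf : ContDiff ℝ (⊤ : ℕ∞) f) : ContDiff ℝ (⊤ : ℕ∞) (pdt f) :=
  (hf.fderiv_right (by simp)).clm_apply contDiff_const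

lemma hasDerivAt_pdx {f : ℝ × ℝ → ℝ} (hf : ContDiff ℝ (⊤ : ℕ∞) f) (x t : ℝ) :
    HasDerivAt (fun y => f (y, t)) (pdx f (x, t)) x := by
  have h1 : HasDerivAt (fun y : ℝ => (y, t)) (((1:ℝ), (0:ℝ)) : ℝ × ℝ) x :=
    (hasDerivAt_id x).prodMk (hasDerivAt_const x t)
  exact ((hf.differentiable (by simp) (x, t)).hasFDerivAt.comp_hasDerivAt x h1)

lemma hasDerivAt_pdt {f : ℝ × ℝ → ℝ} (hf : ContDiff ℝ (⊤ : ℕ∞) f) (x t : ℝ) :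
    HasDerivAt (fun s => f (x, s)) (pdt f (x, t)) t := by
  have h1 : HasDerivAt (fun s : ℝ => (x, s)) (((0:ℝ), (1:ℝ)) : ℝ × ℝ) t :=
    (hasDerivAt_const t x).prodMk (hasDerivAt_id t)
  exact ((hf.differentiable (by simp) (x, t)).hasFDerivAt.comp_hasDerivAt t h1)

lemma fderiv_periodic {f : ℝ × ℝ → ℝ} {L : ℝ} (hf : ContDiff ℝ (⊤ : ℕ∞) f)
    (hper : ∀ x t : ℝ, f (x + L, t) = f (x, t)) (x t : ℝ) :
    fderiv ℝ f (x + L, t) = fderiv ℝ f (x, t) := by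
  have h1 : HasFDerivAt (fun p : ℝ × ℝ => p + (L, 0)) (ContinuousLinearMap.id ℝ (ℝ × ℝ)) (x, t) :=
    (hasFDerivAt_id _).add_const _
  have h2 := ((hf.differentiable (by simp) ((x, t) + (L, 0))).hasFDerivAt.comp (x, t) h1)
  have h3 : (f ∘ fun p : ℝ × ℝ => p + (L, 0)) = f := by
    funext p
    have h4 : p + ((L, 0) : ℝ × ℝ) = (p.1 + L, p.2) := by simp [Prod.ext_iff]
    simp only [Function.comp_apply, h4, hper p.1 p.2]
  rw [h3] at h2
  have h5 := h2.fderiv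
  have h6 : ((x, t) : ℝ × ℝ) + (L, 0) = (x + L, t) := by simp [Prod.ext_iff]
  rw [h5, h6, ContinuousLinearMap.comp_id]

lemma pdx_periodic {f : ℝ × ℝ → ℝ} {L : ℝ} (hf : ContDiff ℝ (⊤ : ℕ∞) f)
    (hper : ∀ x t : ℝ, f (x + L, t) = f (x, t)) (x t : ℝ) :
    pdx f (x + L, t) = pdx f (x, t) := by
  unfold pdx; rw [fderiv_periodic hf hper]

lemma pdt_periodic {f : ℝ × ℝ → ℝ} {L : ℝ} (hf : ContDiff ℝ (⊤ : ℕ∞) f)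
    (hper : ∀ x t : ℝ, f (x + L, t) = f (x, t)) (x t : ℝ) :
    pdt f (x + L, t) = pdt f (x, t) := by
  unfold pdt; rw [fderiv_periodic hf hper]

lemma dgh_flux {L α ω γ : ℝ} {u : ℝ × ℝ → ℝ} (hsmooth : ContDiff ℝ (⊤ : ℕ∞) u)
    (hper : ∀ x t : ℝ, u (x + L, t) = u (x, t))
    (hP : ∀ x t : ℝ,
      pdt u (x, t) - α ^ 2 * pdx (pdx (pdt u)) (x, t) + 2 * ω * pdx u (x, t)
        + 3 * u (x, t) * pdx u (x, t) + γ * pdx (pdx (pdx u)) (x, t)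
      = α ^ 2 * (2 * pdx u (x, t) * pdx (pdx u) (x, t) + u (x, t) * pdx (pdx (pdx u)) (x, t)))
    (t₀ : ℝ) :
    (∫ x in (0:ℝ)..L,
      (3 * u (x, t₀) ^ 2 * pdt u (x, t₀)
        + α ^ 2 * (pdt u (x, t₀) * (pdx u (x, t₀)) ^ 2
            + 2 * u (x, t₀) * pdx u (x, t₀) * pdx (pdt u) (x, t₀))
        + 4 * ω * u (x, t₀) * pdt u (x, t₀)
        - 2 * γ * pdx u (x, t₀) * pdx (pdt u) (x, t₀))) = 0 := by
  -- smoothness of atoms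
  have cU1 := contDiff_pdx hsmooth
  have cU2 := contDiff_pdx cU1
  have cU3 := contDiff_pdx cU2
  have cQ0 := contDiff_pdt hsmooth
  have cQ1 := contDiff_pdx cQ0
  have cQ2 := contDiff_pdx cQ1
  -- one-variable slices
  set v0 : ℝ → ℝ := fun x => u (x, t₀) with hv0def
  set v1 : ℝ → ℝ := fun x => pdx u (x, t₀) with hv1def
  set v2 : ℝ → ℝ := fun x => pdx (pdx u) (x, t₀) with hv2def
  set v3 : ℝ → ℝ := fun x => pdx (pdx (pdx u)) (x, t₀) with hv3def
  set q0 : ℝ → ℝ := fun x => pdt u (x, t₀) with hq0def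
  set q1 : ℝ → ℝ := fun x => pdx (pdt u) (x, t₀) with hq1def
  set q2 : ℝ → ℝ := fun x => pdx (pdx (pdt u)) (x, t₀) with hq2def
  have hv0 : ∀ x, HasDerivAt v0 (v1 x) x := fun x => hasDerivAt_pdx hsmooth x t₀
  have hv1 : ∀ x, HasDerivAt v1 (v2 x) x := fun x => hasDerivAt_pdx cU1 x t₀
  have hv2 : ∀ x, HasDerivAt v2 (v3 x) x := fun x => hasDerivAt_pdx cU2 x t₀
  have hq0 : ∀ x, HasDerivAt q0 (q1 x) x := fun x => hasDerivAt_pdx cQ0 x t₀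
  have hq1 : ∀ x, HasDerivAt q1 (q2 x) x := fun x => hasDerivAt_pdx cQ1 x t₀
  have hPt : ∀ x, q0 x - α ^ 2 * q2 x + 2 * ω * v1 x + 3 * v0 x * v1 x + γ * v3 x
      = α ^ 2 * (2 * v1 x * v2 x + v0 x * v3 x) := fun x => hP x t₀
  -- the potential Φ and w
  set Φ : ℝ → ℝ := fun x => α ^ 2 * q1 x + (-(2 * ω * v0 x) - (3/2) * v0 x ^ 2 - γ * v2 x
      + α ^ 2 * (v0 x * v2 x + v1 x ^ 2 / 2)) with hΦdef
  set w : ℝ → ℝ := fun x => Φ x - Φ 0 with hwdef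
  have hΦ : ∀ x, HasDerivAt Φ (q0 x) x := by
    intro x
    have h := ((hq1 x).const_mul (α ^ 2)).add
      (((((hv0 x).const_mul (2 * ω)).neg.sub (((hv0 x).pow 2).const_mul (3/2))).sub
          ((hv2 x).const_mul γ)).add
        ((((hv0 x).mul (hv2 x)).add (((hv1 x).pow 2).div_const 2)).const_mul (α ^ 2)))
    refine h.congr_deriv (Eq.symm ?_)
    push_cast
    linear_combination hPt x
  have hw : ∀ x, HasDerivAt w (q0 x) x := fun x => (hΦ x).sub_const _
  -- the flux function H
  set Hf : ℝ → ℝ := fun x => 2 * ((α ^ 2 * v0 x - γ) * v1 x * q0 x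
      + (1/2) * (3 * v0 x ^ 2 + 4 * ω * v0 x - α ^ 2 * v1 x ^ 2
          - 2 * (α ^ 2 * v0 x - γ) * v2 x) * w x
      + (1/2) * (w x) ^ 2 - α ^ 2 * q1 x * w x + (α ^ 2 / 2) * (q0 x) ^ 2) with hHdef
  have hH : ∀ x, HasDerivAt Hf
      (3 * v0 x ^ 2 * q0 x + α ^ 2 * (q0 x * v1 x ^ 2 + 2 * v0 x * v1 x * q1 x)
        + 4 * ω * v0 x * q0 x - 2 * γ * v1 x * q1 x) x := by
    intro x
    have hA : HasDerivAt (fun x => α ^ 2 * v0 x - γ) (α ^ 2 * v1 x) x :=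
      ((hv0 x).const_mul (α ^ 2)).sub_const γ
    have hT := (hA.mul (hv1 x)).mul (hq0 x)
    have hAA := (((((hv0 x).pow 2).const_mul 3).add ((hv0 x).const_mul (4 * ω))).sub
        (((hv1 x).pow 2).const_mul (α ^ 2))).sub ((hA.const_mul 2).mul (hv2 x))
    have hB := (hAA.const_mul (1/2)).mul (hw x)
    have hC := ((hw x).pow 2).const_mul (1/2)
    have hD := ((hq1 x).const_mul (α ^ 2)).mul (hw x)
    have hE := ((hq0 x).pow 2).const_mul (α ^ 2 / 2)
    have h2 := ((((hT.add hB).add hC).sub hD).add hE).const_mul 2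
    refine h2.congr_deriv (Eq.symm ?_)
    simp only [Pi.pow_apply, Pi.add_apply, Pi.sub_apply, Pi.mul_apply]
    push_cast
    linear_combination (-2) * w x * hPt x
  -- periodicity at the endpoints
  have pv0 : v0 L = v0 0 := by
    have := hper 0 t₀; simpa [hv0def] using this
  have pv1 : v1 L = v1 0 := by
    have := pdx_periodic hsmooth hper 0 t₀; simpa [hv1def] using this
  have perU1 : ∀ x t, pdx u (x + L, t) = pdx u (x, t) := pdx_periodic hsmooth hper
  have perQ0 : ∀ x t, pdt u (x + L, t) = pdt u (x, t) := pdt_periodic hsmooth hper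
  have pv2 : v2 L = v2 0 := by
    have := pdx_periodic cU1 perU1 0 t₀; simpa [hv2def] using this
  have pq0 : q0 L = q0 0 := by
    have := perQ0 0 t₀; simpa [hq0def] using this
  have pq1 : q1 L = q1 0 := by
    have := pdx_periodic cQ0 perQ0 0 t₀; simpa [hq1def] using this
  have hw0 : w 0 = 0 := by simp [hwdef]
  have hwL : w L = 0 := by
    have : Φ L = Φ 0 := by
      simp only [hΦdef, pv0, pv1, pv2, pq1]
    simp [hwdef, this]
  -- integrability of the integrand
  have hcont : Continuous (fun x => 3 * v0 x ^ 2 * q0 x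
      + α ^ 2 * (q0 x * v1 x ^ 2 + 2 * v0 x * v1 x * q1 x)
      + 4 * ω * v0 x * q0 x - 2 * γ * v1 x * q1 x) := by
    have hc : Continuous (fun x : ℝ => ((x, t₀) : ℝ × ℝ)) := by fun_prop
    have c0 : Continuous v0 := hsmooth.continuous.comp hc
    have c1 : Continuous v1 := cU1.continuous.comp hc
    have c2 : Continuous q0 := cQ0.continuous.comp hc
    have c3 : Continuous q1 := cQ1.continuous.comp hc
    fun_prop
  show (∫ x in (0:ℝ)..L, (3 * v0 x ^ 2 * q0 x
      + α ^ 2 * (q0 x * v1 x ^ 2 + 2 * v0 x * v1 x * q1 x)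
      + 4 * ω * v0 x * q0 x - 2 * γ * v1 x * q1 x)) = 0
  have := intervalIntegral.integral_eq_sub_of_hasDerivAt (f := Hf)
    (fun x _ => hH x) (hcont.intervalIntegrable 0 L)
  rw [this]
  simp only [hHdef, pv0, pv1, pv2, pq0, pq1, hw0, hwL]
  ring

lemma pdt_pdx {f : ℝ × ℝ → ℝ} (hf : ContDiff ℝ (⊤ : ℕ∞) f) : pdt (pdx f) = pdx (pdt f) := by
  funext p
  have hd : ∀ y, HasFDerivAt f (fderiv ℝ f y) y := fun y =>
    (hf.differentiable (by simp) y).hasFDerivAt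
  have hdf : DifferentiableAt ℝ (fderiv ℝ f) p :=
    (hf.fderiv_right (m := 1) (by exact WithTop.coe_le_coe.mpr le_top)).differentiable one_ne_zero p
  have h2 : HasFDerivAt (fderiv ℝ f) (fderiv ℝ (fderiv ℝ f) p) p := hdf.hasFDerivAt
  have hsymm := second_derivative_symmetric hd h2 (1, 0) (0, 1)
  have e1 : pdt (pdx f) p = fderiv ℝ (fderiv ℝ f) p (0, 1) (1, 0) := by
    show fderiv ℝ (fun z => fderiv ℝ f z (1, 0)) p (0, 1) = _
    rw [fderiv_clm_apply hdf (differentiableAt_const _)]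
    simp
  have e2 : pdx (pdt f) p = fderiv ℝ (fderiv ℝ f) p (1, 0) (0, 1) := by
    show fderiv ℝ (fun z => fderiv ℝ f z (0, 1)) p (1, 0) = _
    rw [fderiv_clm_apply hdf (differentiableAt_const _)]
    simp
  rw [e1, e2, hsymm]

set_option maxHeartbeats 1000000 in
lemma dgh_deriv_under_integral {L α ω γ : ℝ} {u : ℝ × ℝ → ℝ}
    (hsmooth : ContDiff ℝ (⊤ : ℕ∞) u) (t₀ : ℝ) :
    HasDerivAt (fun s => ∫ x in (0:ℝ)..L,
        (u (x, s) ^ 3 + α ^ 2 * u (x, s) * (pdx u (x, s)) ^ 2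
          + 2 * ω * u (x, s) ^ 2 - γ * (pdx u (x, s)) ^ 2))
      (∫ x in (0:ℝ)..L,
        (3 * u (x, t₀) ^ 2 * pdt u (x, t₀)
          + α ^ 2 * (pdt u (x, t₀) * (pdx u (x, t₀)) ^ 2
              + 2 * u (x, t₀) * pdx u (x, t₀) * pdx (pdt u) (x, t₀))
          + 4 * ω * u (x, t₀) * pdt u (x, t₀)
          - 2 * γ * pdx u (x, t₀) * pdx (pdt u) (x, t₀))) t₀ := by
  have cU1 := contDiff_pdx hsmooth
  have cQ0 := contDiff_pdt hsmooth
  have cQ1 := contDiff_pdx cQ0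
  have cu2 : Continuous u := hsmooth.continuous
  have cu3 : Continuous (pdx u) := cU1.continuous
  have cq2 : Continuous (pdt u) := cQ0.continuous
  have cq3 : Continuous (pdx (pdt u)) := cQ1.continuous
  have cgt : Continuous (fun p : ℝ × ℝ =>
      3 * u p ^ 2 * pdt u p + α ^ 2 * (pdt u p * (pdx u p) ^ 2
        + 2 * u p * pdx u p * pdx (pdt u) p) + 4 * ω * u p * pdt u p
      - 2 * γ * pdx u p * pdx (pdt u) p) := by fun_prop
  have hK : IsCompact ((Set.uIcc (0:ℝ) L) ×ˢ Metric.closedBall t₀ 1) :=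
    isCompact_uIcc.prod (isCompact_closedBall _ _)
  obtain ⟨C, hC⟩ := hK.exists_bound_of_continuousOn cgt.continuousOn
  have hmeas : ∀ s : ℝ, AEStronglyMeasurable
      (fun x => u (x, s) ^ 3 + α ^ 2 * u (x, s) * (pdx u (x, s)) ^ 2
        + 2 * ω * u (x, s) ^ 2 - γ * (pdx u (x, s)) ^ 2)
      (volume.restrict (Set.uIoc (0:ℝ) L)) := by
    intro s
    have : Continuous (fun x : ℝ => u (x, s) ^ 3 + α ^ 2 * u (x, s) * (pdx u (x, s)) ^ 2
        + 2 * ω * u (x, s) ^ 2 - γ * (pdx u (x, s)) ^ 2) := by fun_prop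
    exact this.aestronglyMeasurable
  have hdiff : ∀ᵐ x ∂(volume : Measure ℝ), x ∈ Set.uIoc (0:ℝ) L →
      ∀ s ∈ Metric.ball t₀ 1,
        HasDerivAt (fun s => u (x, s) ^ 3 + α ^ 2 * u (x, s) * (pdx u (x, s)) ^ 2
            + 2 * ω * u (x, s) ^ 2 - γ * (pdx u (x, s)) ^ 2)
          (3 * u (x, s) ^ 2 * pdt u (x, s)
            + α ^ 2 * (pdt u (x, s) * (pdx u (x, s)) ^ 2
                + 2 * u (x, s) * pdx u (x, s) * pdx (pdt u) (x, s))
            + 4 * ω * u (x, s) * pdt u (x, s)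
            - 2 * γ * pdx u (x, s) * pdx (pdt u) (x, s)) s := by
    refine Filter.Eventually.of_forall (fun x _ s _ => ?_)
    have hu : HasDerivAt (fun s => u (x, s)) (pdt u (x, s)) s := hasDerivAt_pdt hsmooth x s
    have hU1 : HasDerivAt (fun s => pdx u (x, s)) (pdx (pdt u) (x, s)) s := by
      have h := hasDerivAt_pdt cU1 x s
      rwa [pdt_pdx hsmooth] at h
    have h := (((hu.pow 3).add ((hu.const_mul (α ^ 2)).mul (hU1.pow 2))).add
        ((hu.pow 2).const_mul (2 * ω))).sub ((hU1.pow 2).const_mul γ)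
    refine h.congr_deriv (Eq.symm ?_)
    simp only [Pi.pow_apply]
    push_cast
    ring
  have hb : ∀ᵐ x ∂(volume : Measure ℝ), x ∈ Set.uIoc (0:ℝ) L →
      ∀ s ∈ Metric.ball t₀ 1,
        ‖3 * u (x, s) ^ 2 * pdt u (x, s)
            + α ^ 2 * (pdt u (x, s) * (pdx u (x, s)) ^ 2
                + 2 * u (x, s) * pdx u (x, s) * pdx (pdt u) (x, s))
            + 4 * ω * u (x, s) * pdt u (x, s)
            - 2 * γ * pdx u (x, s) * pdx (pdt u) (x, s)‖ ≤ C := by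
    refine Filter.Eventually.of_forall (fun x hx s hs => ?_)
    exact hC (x, s) ⟨Set.uIoc_subset_uIcc hx, Metric.ball_subset_closedBall hs⟩
  have hmeas' : AEStronglyMeasurable
      (fun x => 3 * u (x, t₀) ^ 2 * pdt u (x, t₀)
        + α ^ 2 * (pdt u (x, t₀) * (pdx u (x, t₀)) ^ 2
            + 2 * u (x, t₀) * pdx u (x, t₀) * pdx (pdt u) (x, t₀))
        + 4 * ω * u (x, t₀) * pdt u (x, t₀)
        - 2 * γ * pdx u (x, t₀) * pdx (pdt u) (x, t₀))
      (volume.restrict (Set.uIoc (0:ℝ) L)) := by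
    have : Continuous (fun x : ℝ => 3 * u (x, t₀) ^ 2 * pdt u (x, t₀)
        + α ^ 2 * (pdt u (x, t₀) * (pdx u (x, t₀)) ^ 2
            + 2 * u (x, t₀) * pdx u (x, t₀) * pdx (pdt u) (x, t₀))
        + 4 * ω * u (x, t₀) * pdt u (x, t₀)
        - 2 * γ * pdx u (x, t₀) * pdx (pdt u) (x, t₀)) := by fun_prop
    exact this.aestronglyMeasurable
  have hint : IntervalIntegrable
      (fun x => u (x, t₀) ^ 3 + α ^ 2 * u (x, t₀) * (pdx u (x, t₀)) ^ 2
        + 2 * ω * u (x, t₀) ^ 2 - γ * (pdx u (x, t₀)) ^ 2) volume 0 L := by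
    have : Continuous (fun x : ℝ => u (x, t₀) ^ 3 + α ^ 2 * u (x, t₀) * (pdx u (x, t₀)) ^ 2
        + 2 * ω * u (x, t₀) ^ 2 - γ * (pdx u (x, t₀)) ^ 2) := by fun_prop
    exact this.intervalIntegrable 0 L
  exact (intervalIntegral.hasDerivAt_integral_of_dominated_loc_of_deriv_le (Metric.ball_mem_nhds t₀ one_pos)
    (Filter.Eventually.of_forall hmeas) hint hmeas' hb
    (intervalIntegrable_const) hdiff).2

lemma iter2_eq {f : ℝ × ℝ → ℝ} (hf : ContDiff ℝ (⊤ : ℕ∞) f) (x t : ℝ) :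
    iteratedDeriv 2 (fun y => f (y, t)) x = pdx (pdx f) (x, t) := by
  have h1 : deriv (fun y => f (y, t)) = fun y => pdx f (y, t) :=
    funext fun y => (hasDerivAt_pdx hf y t).deriv
  rw [show (2:ℕ) = 1 + 1 from rfl, iteratedDeriv_succ, iteratedDeriv_one, h1]
  exact (hasDerivAt_pdx (contDiff_pdx hf) x t).deriv

lemma iter3_eq {f : ℝ × ℝ → ℝ} (hf : ContDiff ℝ (⊤ : ℕ∞) f) (x t : ℝ) :
    iteratedDeriv 3 (fun y => f (y, t)) x = pdx (pdx (pdx f)) (x, t) := by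
  have h1 : deriv (fun y => f (y, t)) = fun y => pdx f (y, t) :=
    funext fun y => (hasDerivAt_pdx hf y t).deriv
  have h2 : deriv (fun y => pdx f (y, t)) = fun y => pdx (pdx f) (y, t) :=
    funext fun y => (hasDerivAt_pdx (contDiff_pdx hf) y t).deriv
  rw [show (3:ℕ) = 1 + 1 + 1 from rfl, iteratedDeriv_succ, iteratedDeriv_succ,
    iteratedDeriv_one, h1, h2]
  exact (hasDerivAt_pdx (contDiff_pdx (contDiff_pdx hf)) x t).deriv

/-- Conservation of `F(u) = (1/2)∫₀ᴸ (u³ + α² u uₓ² + 2ω u² − γ uₓ²) dx` for smooth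
spatially `L`-periodic solutions of the Dullin–Gottwald–Holm equation
`(1 − α²∂ₓ²)uₜ + 2ω uₓ + 3u uₓ + γ uₓₓₓ = α²(2 uₓ uₓₓ + u uₓₓₓ)`. -/
theorem dgh_F_conserved
    (L α ω γ : ℝ) (hL : 0 < L) (hα : 0 < α)
    (u : ℝ × ℝ → ℝ)
    (hsmooth : ContDiff ℝ (⊤ : ℕ∞) u)
    (hper : ∀ x t : ℝ, u (x + L, t) = u (x, t))
    (hPDE : ∀ x t : ℝ,
      deriv (fun s => u (x, s)) t
        - α ^ 2 * iteratedDeriv 2 (fun y => deriv (fun s => u (y, s)) t) x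
        + 2 * ω * deriv (fun y => u (y, t)) x
        + 3 * u (x, t) * deriv (fun y => u (y, t)) x
        + γ * iteratedDeriv 3 (fun y => u (y, t)) x
      = α ^ 2 * (2 * deriv (fun y => u (y, t)) x
            * iteratedDeriv 2 (fun y => u (y, t)) x
          + u (x, t) * iteratedDeriv 3 (fun y => u (y, t)) x)) :
    ∀ t : ℝ,
      (1 / 2) * ∫ x in (0:ℝ)..L,
          (u (x, t) ^ 3 + α ^ 2 * u (x, t) * (deriv (fun y => u (y, t)) x) ^ 2
            + 2 * ω * u (x, t) ^ 2 - γ * (deriv (fun y => u (y, t)) x) ^ 2)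
      = (1 / 2) * ∫ x in (0:ℝ)..L,
          (u (x, 0) ^ 3 + α ^ 2 * u (x, 0) * (deriv (fun y => u (y, 0)) x) ^ 2
            + 2 * ω * u (x, 0) ^ 2 - γ * (deriv (fun y => u (y, 0)) x) ^ 2) := by
  intro t
  have cQ0 := contDiff_pdt hsmooth
  -- rewrite the PDE in terms of pdx / pdt
  have hP : ∀ x t : ℝ,
      pdt u (x, t) - α ^ 2 * pdx (pdx (pdt u)) (x, t) + 2 * ω * pdx u (x, t)
        + 3 * u (x, t) * pdx u (x, t) + γ * pdx (pdx (pdx u)) (x, t)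
      = α ^ 2 * (2 * pdx u (x, t) * pdx (pdx u) (x, t)
          + u (x, t) * pdx (pdx (pdx u)) (x, t)) := by
    intro x t
    have h := hPDE x t
    rw [show (fun y => deriv (fun s => u (y, s)) t) = (fun y => pdt u (y, t)) from
        funext fun y => (hasDerivAt_pdt hsmooth y t).deriv] at h
    rw [(hasDerivAt_pdt hsmooth x t).deriv, (hasDerivAt_pdx hsmooth x t).deriv,
      iter2_eq cQ0 x t, iter2_eq hsmooth x t, iter3_eq hsmooth x t] at h
    exact h
  -- constancy of the integral
  have key : ∀ s : ℝ, HasDerivAt (fun s => ∫ x in (0:ℝ)..L,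
      (u (x, s) ^ 3 + α ^ 2 * u (x, s) * (pdx u (x, s)) ^ 2
        + 2 * ω * u (x, s) ^ 2 - γ * (pdx u (x, s)) ^ 2)) 0 s := by
    intro s
    have h := dgh_deriv_under_integral (L := L) (α := α) (ω := ω) (γ := γ) hsmooth s
    rwa [dgh_flux hsmooth hper hP s] at h
  have hconst := is_const_of_deriv_eq_zero
    (fun s => (key s).differentiableAt) (fun s => (key s).deriv) t 0
  have hIg : ∀ s : ℝ,
      (∫ x in (0:ℝ)..L,
        (u (x, s) ^ 3 + α ^ 2 * u (x, s) * (deriv (fun y => u (y, s)) x) ^ 2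
          + 2 * ω * u (x, s) ^ 2 - γ * (deriv (fun y => u (y, s)) x) ^ 2))
      = ∫ x in (0:ℝ)..L,
        (u (x, s) ^ 3 + α ^ 2 * u (x, s) * (pdx u (x, s)) ^ 2
          + 2 * ω * u (x, s) ^ 2 - γ * (pdx u (x, s)) ^ 2) := by
    intro s
    refine intervalIntegral.integral_congr (fun x _ => ?_)
    rw [(hasDerivAt_pdx hsmooth x s).deriv]
  rw [hIg t, hIg 0, hconst]
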